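/- arXiv:1410.3504 — 4 statements merged into one kernel-verified Lean document; each statement's English description precedes it below -/
import Mathlib

section
/- Let D ⊆ ℝᵏ be a Whitney 1-regular compact set and let f, g : D → ℝ be Lipschitz functions with f ≤ g pointwise. Then the prism K = { (x, t) ∈ ℝᵏ × ℝ : x ∈ D, f(x) ≤ t ≤ g(x) } is a Whitney 1-regular compact set in ℝ^{k+1}. -/
/-!
Join `(x, s)` and `(y, t)` in the prism by following a short path `γ` from `x` to `y` in `D`
horizontally, while the vertical coordinate runs along the segment from `s` to `t`, clamped
between `f ∘ γ` and `g ∘ γ`. Clamping is 1-Lipschitz, so the lifted path has length at most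
`(1 + Lip f + Lip g) · length γ + |s - t|`. The prism is compact as the image of `D × [0, 1]`
under `(x, λ) ↦ (x, (1 - λ) f x + λ g x)`. Both properties pass from the sup metric to the
Euclidean metric on `ℝᵏ × ℝ`, the two being bi-Lipschitz equivalent.
-/

/-- A set `K` is Whitney 1-regular if there is `C > 0` such that any two of its
points are joined by a rectifiable path in `K` of length at most `C` times
their distance. -/
def WhitneyOneRegular {E : Type*} [PseudoEMetricSpace E] (K : Set E) : Prop :=
  ∃ C : ℝ, 0 < C ∧ ∀ x ∈ K, ∀ y ∈ K, ∃ γ : ℝ → E,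
    ContinuousOn γ (Set.Icc 0 1) ∧ γ 0 = x ∧ γ 1 = y ∧
    Set.MapsTo γ (Set.Icc 0 1) K ∧
    eVariationOn γ (Set.Icc 0 1) ≤ ENNReal.ofReal C * edist x y

open Set AffineMap
open scoped NNReal ENNReal

section Variation

variable {α : Type*} [LinearOrder α]

theorem eVariationOn_prodMk_le_add {E F : Type*} [PseudoEMetricSpace E] [PseudoEMetricSpace F]
    (a : α → E) (b : α → F) (s : Set α) :
    eVariationOn (fun u => (a u, b u)) s ≤ eVariationOn a s + eVariationOn b s := by
  refine iSup_le fun ⟨n, u, hu, us⟩ => ?_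
  calc ∑ i ∈ Finset.range n, edist (a (u (i + 1)), b (u (i + 1))) (a (u i), b (u i))
      ≤ ∑ i ∈ Finset.range n,
          (edist (a (u (i + 1))) (a (u i)) + edist (b (u (i + 1))) (b (u i))) :=
        Finset.sum_le_sum fun i _ => by
          rw [Prod.edist_eq]
          exact max_le le_self_add le_add_self
    _ = (∑ i ∈ Finset.range n, edist (a (u (i + 1))) (a (u i)))
          + ∑ i ∈ Finset.range n, edist (b (u (i + 1))) (b (u i)) := Finset.sum_add_distrib
    _ ≤ eVariationOn a s + eVariationOn b s :=
        add_le_add (eVariationOn.sum_le hu us) (eVariationOn.sum_le hu us)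

theorem LipschitzWith.eVariationOn_comp_prodMk_le {E F G : Type*} [PseudoEMetricSpace E]
    [PseudoEMetricSpace F] [PseudoEMetricSpace G] {φ : E × F → G} {K : ℝ≥0}
    (hφ : LipschitzWith K φ) (a : α → E) (b : α → F) (s : Set α) :
    eVariationOn (fun u => φ (a u, b u)) s ≤ K * (eVariationOn a s + eVariationOn b s) :=
  (hφ.lipschitzOnWith.comp_eVariationOn_le (mapsTo_univ _ s)).trans
    (mul_le_mul_right (eVariationOn_prodMk_le_add a b s) _)

end Variation

theorem eVariationOn_lineMap_Icc_le {V P : Type*} [SeminormedAddCommGroup V] [NormedSpace ℝ V]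
    [PseudoMetricSpace P] [NormedAddTorsor V P] (p₁ p₂ : P) :
    eVariationOn (lineMap p₁ p₂ : ℝ → P) (Icc 0 1) ≤ edist p₁ p₂ := by
  calc eVariationOn (lineMap p₁ p₂ ∘ id) (Icc 0 1)
      ≤ nndist p₁ p₂ * eVariationOn (id : ℝ → ℝ) (Icc 0 1) :=
        (lipschitzWith_lineMap p₁ p₂).lipschitzOnWith.comp_eVariationOn_le (mapsTo_univ _ _)
    _ = edist p₁ p₂ := by
        rw [eVariationOn_id_Icc, sub_zero, ENNReal.ofReal_one, mul_one, edist_nndist]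

section Whitney

variable {E F : Type*} [PseudoEMetricSpace E] [PseudoEMetricSpace F]

theorem whitneyOneRegular_iff {K : Set E} :
    WhitneyOneRegular K ↔ ∃ C : ℝ≥0, ∀ x ∈ K, ∀ y ∈ K, ∃ γ : ℝ → E,
      ContinuousOn γ (Icc 0 1) ∧ γ 0 = x ∧ γ 1 = y ∧ MapsTo γ (Icc 0 1) K ∧
      eVariationOn γ (Icc 0 1) ≤ C * edist x y := by
  constructor
  · rintro ⟨C, -, hC⟩
    exact ⟨C.toNNReal, hC⟩
  · rintro ⟨C, hC⟩
    refine ⟨C + 1, by positivity, fun x hx y hy => ?_⟩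
    obtain ⟨γ, hγc, hγ0, hγ1, hγK, hγvar⟩ := hC x hx y hy
    refine ⟨γ, hγc, hγ0, hγ1, hγK, hγvar.trans (mul_le_mul_left ?_ _)⟩
    rw [ENNReal.ofReal_add C.coe_nonneg zero_le_one, ENNReal.ofReal_coe_nnreal]
    exact le_self_add

theorem WhitneyOneRegular.image {K : Set E} (hK : WhitneyOneRegular K) {φ : E → F}
    {Kφ Kψ : ℝ≥0} (hφ : LipschitzWith Kφ φ) (hψ : AntilipschitzWith Kψ φ) :
    WhitneyOneRegular (φ '' K) := by
  rw [whitneyOneRegular_iff] at hK ⊢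
  obtain ⟨C, hC⟩ := hK
  refine ⟨Kφ * C * Kψ, ?_⟩
  rintro _ ⟨x, hx, rfl⟩ _ ⟨y, hy, rfl⟩
  obtain ⟨γ, hγc, hγ0, hγ1, hγK, hγvar⟩ := hC x hx y hy
  refine ⟨φ ∘ γ, hφ.continuous.comp_continuousOn hγc, by simp [hγ0], by simp [hγ1],
    fun u hu => mem_image_of_mem φ (hγK hu), ?_⟩
  calc eVariationOn (φ ∘ γ) (Icc 0 1)
      ≤ Kφ * eVariationOn γ (Icc 0 1) :=
        hφ.lipschitzOnWith.comp_eVariationOn_le (mapsTo_univ _ _)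
    _ ≤ Kφ * (C * (Kψ * edist (φ x) (φ y))) := by grw [hγvar, hψ x y]
    _ = ↑(Kφ * C * Kψ) * edist (φ x) (φ y) := by push_cast; ring

end Whitney

def prism {X : Type*} (D : Set X) (f g : X → ℝ) : Set (X × ℝ) :=
  {p | p.1 ∈ D ∧ f p.1 ≤ p.2 ∧ p.2 ≤ g p.1}

theorem IsCompact.prism {X : Type*} [TopologicalSpace X] {D : Set X} (hD : IsCompact D)
    {f g : X → ℝ} (hf : ContinuousOn f D) (hg : ContinuousOn g D)
    (hfg : ∀ x ∈ D, f x ≤ g x) : IsCompact (prism D f g) := by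
  have hprism : _root_.prism D f g =
      (fun q : X × ℝ => (q.1, lineMap (f q.1) (g q.1) q.2)) '' (D ×ˢ Icc 0 1) := by
    ext ⟨x, t⟩
    simp only [mem_image, mem_prod, Prod.exists, Prod.mk.injEq]
    constructor
    · rintro ⟨hx, ht⟩
      obtain ⟨s, hs, rfl⟩ : t ∈ lineMap (f x) (g x) '' Icc (0 : ℝ) 1 := by
        rw [← segment_eq_image_lineMap, segment_eq_Icc (hfg x hx)]
        exact ht
      exact ⟨x, s, ⟨hx, hs⟩, rfl, rfl⟩
    · rintro ⟨x, s, ⟨hx, hs⟩, rfl, rfl⟩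
      have : lineMap (f x) (g x) s ∈ Icc (f x) (g x) := by
        rw [← segment_eq_Icc (𝕜 := ℝ) (hfg x hx), segment_eq_image_lineMap]
        exact mem_image_of_mem _ hs
      exact ⟨hx, this⟩
  rw [hprism]
  refine (hD.prod isCompact_Icc).image_of_continuousOn
    (continuousOn_fst.prodMk (ContinuousOn.lineMap ?_ ?_ continuousOn_snd))
  · exact hf.comp continuousOn_fst fun q hq => hq.1
  · exact hg.comp continuousOn_fst fun q hq => hq.1

theorem WhitneyOneRegular.prism {X : Type*} [PseudoEMetricSpace X] {D : Set X}
    (hD : WhitneyOneRegular D) {f g : X → ℝ} {Lf Lg : ℝ≥0} (hf : LipschitzOnWith Lf f D)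
    (hg : LipschitzOnWith Lg g D) (hfg : ∀ x ∈ D, f x ≤ g x) :
    WhitneyOneRegular (_root_.prism D f g) := by
  rw [whitneyOneRegular_iff] at hD ⊢
  obtain ⟨C, hC⟩ := hD
  refine ⟨(1 + Lf + Lg) * C + 1, ?_⟩
  rintro p ⟨hpD, hpf, hpg⟩ q ⟨hqD, hqf, hqg⟩
  obtain ⟨γ, hγc, hγ0, hγ1, hγD, hγvar⟩ := hC p.1 hpD q.1 hqD
  set h : ℝ → ℝ := fun u => max (f (γ u)) (min (g (γ u)) (lineMap p.2 q.2 u))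
  have hfγ : eVariationOn (f ∘ γ) (Icc 0 1) ≤ Lf * eVariationOn γ (Icc 0 1) :=
    hf.comp_eVariationOn_le hγD
  have hgγ : eVariationOn (g ∘ γ) (Icc 0 1) ≤ Lg * eVariationOn γ (Icc 0 1) :=
    hg.comp_eVariationOn_le hγD
  have hh : eVariationOn h (Icc 0 1) ≤
      Lf * eVariationOn γ (Icc 0 1) + (Lg * eVariationOn γ (Icc 0 1) + edist p.2 q.2) := by
    have hmax := lipschitzWith_max.eVariationOn_comp_prodMk_le (f ∘ γ)
      (fun u => min (g (γ u)) (lineMap p.2 q.2 u)) (Icc 0 1)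
    have hmin := lipschitzWith_min.eVariationOn_comp_prodMk_le (g ∘ γ)
      (lineMap p.2 q.2 : ℝ → ℝ) (Icc 0 1)
    simp only [Function.comp_apply, ENNReal.coe_one, one_mul] at hmax hmin
    grw [hmax, hmin, hfγ, hgγ, eVariationOn_lineMap_Icc_le]
  have hfst : edist p.1 q.1 ≤ edist p q := (Prod.edist_eq p q).symm ▸ le_max_left _ _
  have hsnd : edist p.2 q.2 ≤ edist p q := (Prod.edist_eq p q).symm ▸ le_max_right _ _
  refine ⟨fun u => (γ u, h u), hγc.prodMk ?_, ?_, ?_, fun u hu => ?_, ?_⟩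
  · exact ContinuousOn.sup (hf.continuousOn.comp hγc hγD)
      (ContinuousOn.inf (hg.continuousOn.comp hγc hγD) lineMap_continuous.continuousOn)
  · simp [h, hγ0, min_eq_right hpg, max_eq_right hpf]
  · simp [h, hγ1, min_eq_right hqg, max_eq_right hqf]
  · exact ⟨hγD hu, le_max_left _ _, max_le (hfg _ (hγD hu)) (min_le_left _ _)⟩
  · calc eVariationOn (fun u => (γ u, h u)) (Icc 0 1)
        ≤ eVariationOn γ (Icc 0 1) + eVariationOn h (Icc 0 1) := eVariationOn_prodMk_le_add ..
      _ ≤ C * edist p q + (Lf * (C * edist p q) + (Lg * (C * edist p q) + edist p q)) := by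
        grw [hh, hγvar, hfst, hsnd]
      _ = ↑((1 + Lf + Lg) * C + 1) * edist p q := by push_cast; ring

/-- The prism between the graphs of two Lipschitz functions over a Whitney
1-regular compact set is a Whitney 1-regular compact set in `ℝ^(k+1)`. -/
theorem stmt_4 {k : ℕ} (D : Set (EuclideanSpace ℝ (Fin k)))
    (hD : IsCompact D) (hreg : WhitneyOneRegular D)
    (f g : EuclideanSpace ℝ (Fin k) → ℝ) (Lf Lg : NNReal)
    (hf : LipschitzOnWith Lf f D) (hg : LipschitzOnWith Lg g D)
    (hfg : ∀ x ∈ D, f x ≤ g x) :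
    IsCompact {z : WithLp 2 (EuclideanSpace ℝ (Fin k) × ℝ) |
        z.ofLp.1 ∈ D ∧ f z.ofLp.1 ≤ z.ofLp.2 ∧ z.ofLp.2 ≤ g z.ofLp.1} ∧
    WhitneyOneRegular {z : WithLp 2 (EuclideanSpace ℝ (Fin k) × ℝ) |
        z.ofLp.1 ∈ D ∧ f z.ofLp.1 ≤ z.ofLp.2 ∧ z.ofLp.2 ≤ g z.ofLp.1} := by
  have hK : {z : WithLp 2 (EuclideanSpace ℝ (Fin k) × ℝ) |
      z.ofLp.1 ∈ D ∧ f z.ofLp.1 ≤ z.ofLp.2 ∧ z.ofLp.2 ≤ g z.ofLp.1} =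
      WithLp.toLp 2 '' prism D f g :=
    ext fun z => ⟨fun hz => ⟨z.ofLp, hz, rfl⟩, by rintro ⟨p, hp, rfl⟩; exact hp⟩
  rw [hK]
  have hLip := WithLp.prod_lipschitzWith_toLp 2 (EuclideanSpace ℝ (Fin k)) ℝ
  exact ⟨(hD.prism hf.continuousOn hg.continuousOn hfg).image hLip.continuous,
    (hreg.prism hf hg hfg).image hLip (WithLp.prod_antilipschitzWith_toLp 2 _ _)⟩
end

section
/- Let K ⊆ ℝⁿ be a connected compact set and f : K → ℝ continuous. If all but finitely many level sets f⁻¹(c) ∩ K (for c ∈ f(K)) are connected, then every level set f⁻¹(c) ∩ K is connected. -/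
open Set

/-- Splitting a preconnected set into two disjoint nonempty closed pieces is impossible. -/
lemma split_contra {α : Type*} [TopologicalSpace α] {K C₁ C₂ : Set α}
    (hK : IsPreconnected K) (h₁ : IsClosed C₁) (h₂ : IsClosed C₂)
    (hcov : K ⊆ C₁ ∪ C₂) (hdisj : K ∩ (C₁ ∩ C₂) = ∅)
    (hn₁ : (K ∩ C₁).Nonempty) (hn₂ : (K ∩ C₂).Nonempty) : False := by
  have := (isPreconnected_closed_iff.mp hK) C₁ C₂ h₁ h₂ hcov hn₁ hn₂
  rw [hdisj] at this
  exact Set.not_nonempty_empty this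

/-- Kostov's lemma: if a continuous function on a connected compact set has all
but finitely many level sets connected, then all its level sets are connected. -/
theorem stmt_5 {n : ℕ} (K : Set (EuclideanSpace ℝ (Fin n)))
    (hKc : IsCompact K) (hKconn : IsConnected K)
    (f : EuclideanSpace ℝ (Fin n) → ℝ) (hf : ContinuousOn f K)
    (F : Finset ℝ) (hF : ∀ c : ℝ, c ∉ F → IsPreconnected (K ∩ f ⁻¹' {c})) :
    ∀ c : ℝ, IsPreconnected (K ∩ f ⁻¹' {c}) := by
  intro c
  by_contra hc
  unfold IsPreconnected at hc
  push_neg at hc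
  obtain ⟨u, v, hu, hv, hsuv, ⟨a, hau⟩, ⟨b, hbv⟩, hne⟩ := hc
  set s : Set (EuclideanSpace ℝ (Fin n)) := K ∩ f ⁻¹' {c} with hs_def
  have hs_closed : IsClosed s :=
    hf.preimage_isClosed_of_isClosed hKc.isClosed isClosed_singleton
  -- the two pieces of the fiber
  have hAv : s ∩ u = s \ v := by
    apply Set.eq_of_subset_of_subset
    · rintro x ⟨hxs, hxu⟩
      refine ⟨hxs, fun hxv => ?_⟩
      have : x ∈ s ∩ (u ∩ v) := ⟨hxs, hxu, hxv⟩
      rw [hne] at this; exact this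
    · rintro x ⟨hxs, hxv⟩
      rcases hsuv hxs with h | h
      · exact ⟨hxs, h⟩
      · exact absurd h hxv
  have hBu : s ∩ v = s \ u := by
    apply Set.eq_of_subset_of_subset
    · rintro x ⟨hxs, hxv⟩
      refine ⟨hxs, fun hxu => ?_⟩
      have : x ∈ s ∩ (u ∩ v) := ⟨hxs, hxu, hxv⟩
      rw [hne] at this; exact this
    · rintro x ⟨hxs, hxu⟩
      rcases hsuv hxs with h | h
      · exact absurd h hxu
      · exact ⟨hxs, h⟩
  have hAc : IsCompact (s ∩ u) := by
    rw [hAv]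
    exact hKc.of_isClosed_subset (hs_closed.inter hv.isClosed_compl)
      (fun x hx => hx.1.1)
  have hBc : IsCompact (s ∩ v) := by
    rw [hBu]
    exact hKc.of_isClosed_subset (hs_closed.inter hu.isClosed_compl)
      (fun x hx => hx.1.1)
  have hABd : Disjoint (s ∩ u) (s ∩ v) := by
    rw [Set.disjoint_left]
    rintro x ⟨hxs, hxu⟩ ⟨_, hxv⟩
    have : x ∈ s ∩ (u ∩ v) := ⟨hxs, hxu, hxv⟩
    rw [hne] at this; exact this
  obtain ⟨U, V, hU, hV, hAU, hBV, hUV⟩ :=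
    SeparatedNhds.of_isCompact_isCompact hAc hBc hABd
  -- the compact part of K away from U ∪ V avoids values near c
  have hWc : IsCompact (K \ (U ∪ V)) := hKc.diff (hU.union hV)
  have hWfib : ∀ x ∈ K \ (U ∪ V), f x ≠ c := by
    rintro x ⟨hxK, hxUV⟩ hfx
    have hxs : x ∈ s := ⟨hxK, hfx⟩
    rcases hsuv hxs with h | h
    · exact hxUV (Or.inl (hAU ⟨hxs, h⟩))
    · exact hxUV (Or.inr (hBV ⟨hxs, h⟩))
  obtain ⟨δ, hδpos, hδ⟩ :
      ∃ δ > 0, ∀ x ∈ K, f x ∈ Ioo (c - δ) (c + δ) → x ∈ U ∪ V := by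
    rcases (K \ (U ∪ V)).eq_empty_or_nonempty with hW | hW
    · refine ⟨1, one_pos, fun x hxK hfx => ?_⟩
      by_contra hxUV
      have : x ∈ K \ (U ∪ V) := ⟨hxK, hxUV⟩
      rw [hW] at this; exact this
    · have hcont : ContinuousOn (fun x => |f x - c|) (K \ (U ∪ V)) :=
        ((hf.mono Set.diff_subset).sub continuousOn_const).abs
      obtain ⟨w, hwW, hwmin⟩ := hWc.exists_isMinOn hW hcont
      refine ⟨|f w - c|, ?_, fun x hxK hfx => ?_⟩
      · rcases abs_pos.mpr (sub_ne_zero.mpr (hWfib w hwW)) with h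
        exact h
      · by_contra hxUV
        have hxW : x ∈ K \ (U ∪ V) := ⟨hxK, hxUV⟩
        have h1 : |f w - c| ≤ |f x - c| := hwmin hxW
        have h2 : |f x - c| < |f w - c| := by
          rw [abs_sub_lt_iff]
          constructor <;> linarith [hfx.1, hfx.2]
        linarith
  -- pick good regular values below and above c
  obtain ⟨t', ht'mem, ht'F⟩ :=
    (Set.Ioo_infinite (by linarith : c - δ < c)).exists_notMem_finset F
  obtain ⟨t, htmem, htF⟩ :=
    (Set.Ioo_infinite (by linarith : c < c + δ)).exists_notMem_finset F
  have ht't : t' < t := lt_trans ht'mem.2 htmem.1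
  -- the key sets
  set N : Set (EuclideanSpace ℝ (Fin n)) := K ∩ f ⁻¹' (Icc t' t) with hN_def
  set Klow : Set (EuclideanSpace ℝ (Fin n)) := K ∩ f ⁻¹' (Iic t') with hKlow_def
  set Khigh : Set (EuclideanSpace ℝ (Fin n)) := K ∩ f ⁻¹' (Ici t) with hKhigh_def
  set X : Set (EuclideanSpace ℝ (Fin n)) := N ∩ Uᶜ with hX_def
  set Y : Set (EuclideanSpace ℝ (Fin n)) := N ∩ Vᶜ with hY_def
  have hNsub : ∀ x ∈ N, x ∈ U ∪ V := by
    rintro x ⟨hxK, hxf⟩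
    exact hδ x hxK ⟨by linarith [hxf.1, ht'mem.1], by linarith [hxf.2, htmem.2]⟩
  have hN_closed : IsClosed N :=
    hf.preimage_isClosed_of_isClosed hKc.isClosed isClosed_Icc
  have hKlow_closed : IsClosed Klow :=
    hf.preimage_isClosed_of_isClosed hKc.isClosed isClosed_Iic
  have hKhigh_closed : IsClosed Khigh :=
    hf.preimage_isClosed_of_isClosed hKc.isClosed isClosed_Ici
  have hX_closed : IsClosed X := hN_closed.inter hU.isClosed_compl
  have hY_closed : IsClosed Y := hN_closed.inter hV.isClosed_compl
  -- basic disjointness facts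
  have hXY : X ∩ Y = ∅ := by
    ext x
    simp only [Set.mem_inter_iff, Set.mem_empty_iff_false, iff_false]
    rintro ⟨⟨hxN, hxU⟩, _, hxV⟩
    rcases hNsub x hxN with h | h
    · exact hxU h
    · exact hxV h
  have hlowhigh : Klow ∩ Khigh = ∅ := by
    ext x
    simp only [Set.mem_inter_iff, Set.mem_empty_iff_false, iff_false]
    rintro ⟨⟨_, h1⟩, _, h2⟩
    have : f x ≤ t' := h1
    have : t ≤ f x := h2
    linarith
  have hlowN : ∀ x, x ∈ Klow → x ∈ N → f x = t' := by
    rintro x ⟨_, h1⟩ ⟨_, h2⟩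
    exact le_antisymm h1 h2.1
  have hhighN : ∀ x, x ∈ Khigh → x ∈ N → f x = t := by
    rintro x ⟨_, h1⟩ ⟨_, h2⟩
    exact le_antisymm h2.2 h1
  -- the fibers at t', t each lie wholly in U or in V
  have hside : ∀ r : ℝ, r ∉ F → r ∈ Icc t' t →
      (K ∩ f ⁻¹' {r}) ∩ U = ∅ ∨ (K ∩ f ⁻¹' {r}) ∩ V = ∅ := by
    intro r hrF hr
    by_contra h
    push_neg at h
    have hsub : K ∩ f ⁻¹' {r} ⊆ U ∪ V := by
      rintro x ⟨hxK, hxf⟩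
      exact hNsub x ⟨hxK, by simp only [Set.mem_preimage,
        Set.mem_singleton_iff] at hxf; rw [Set.mem_preimage, hxf]; exact hr⟩
    have := hF r hrF U V hU hV hsub h.1 h.2
    obtain ⟨x, _, hxU, hxV⟩ := this
    exact Set.disjoint_left.mp hUV hxU hxV
  have hside' := hside t' ht'F ⟨le_refl t', le_of_lt ht't⟩
  have hsidet := hside t htF ⟨le_of_lt ht't, le_refl t⟩
  -- a and b give nonemptiness of Y and X
  have haY : a ∈ K ∩ Y := by
    have haU : a ∈ U := hAU hau
    have haN : a ∈ N := ⟨hau.1.1, by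
      have : f a = c := hau.1.2
      rw [Set.mem_preimage, this]
      exact ⟨le_of_lt ht'mem.2, le_of_lt htmem.1⟩⟩
    exact ⟨hau.1.1, haN, fun hV' => Set.disjoint_left.mp hUV haU hV'⟩
  have hbX : b ∈ K ∩ X := by
    have hbV : b ∈ V := hBV hbv
    have hbN : b ∈ N := ⟨hbv.1.1, by
      have : f b = c := hbv.1.2
      rw [Set.mem_preimage, this]
      exact ⟨le_of_lt ht'mem.2, le_of_lt htmem.1⟩⟩
    exact ⟨hbv.1.1, hbN, fun hU' => Set.disjoint_left.mp hUV hU' hbV⟩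
  -- cover fact
  have hcover : ∀ C₁ C₂ : Set (EuclideanSpace ℝ (Fin n)),
      Klow ∪ X ∪ Y ∪ Khigh ⊆ C₁ ∪ C₂ → K ⊆ C₁ ∪ C₂ := by
    intro C₁ C₂ h x hxK
    apply h
    rcases le_or_gt (f x) t' with h1 | h1
    · exact Or.inl (Or.inl (Or.inl ⟨hxK, h1⟩))
    · rcases le_or_gt t (f x) with h2 | h2
      · exact Or.inr ⟨hxK, h2⟩
      · have hxN : x ∈ N := ⟨hxK, le_of_lt h1, le_of_lt h2⟩
        rcases hNsub x hxN with h3 | h3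
        · exact Or.inl (Or.inr ⟨hxN, fun hV' => Set.disjoint_left.mp hUV h3 hV'⟩)
        · exact Or.inl (Or.inl (Or.inr ⟨hxN, fun hU' =>
            Set.disjoint_left.mp hUV hU' h3⟩))
  -- fiber membership helpers
  have hfib' : ∀ x, x ∈ K → f x = t' → x ∈ K ∩ f ⁻¹' {t'} := fun x h1 h2 => ⟨h1, h2⟩
  have hfibt : ∀ x, x ∈ K → f x = t → x ∈ K ∩ f ⁻¹' {t} := fun x h1 h2 => ⟨h1, h2⟩
  -- now the case analysis
  rcases hside' with h' | h' <;> rcases hsidet with h | h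
  · -- fib(t') ∩ U = ∅, fib(t) ∩ U = ∅ : Y is clopen-ish piece
    refine split_contra hKconn.isPreconnected hY_closed
      ((hKlow_closed.union hX_closed).union hKhigh_closed)
      (hcover _ _ ?_) ?_ ⟨a, haY⟩ ⟨b, hbX.1, Or.inl (Or.inr hbX.2)⟩
    · rintro x (((h1 | h1) | h1) | h1)
      · exact Or.inr (Or.inl (Or.inl h1))
      · exact Or.inr (Or.inl (Or.inr h1))
      · exact Or.inl h1
      · exact Or.inr (Or.inr h1)
    · ext x
      simp only [Set.mem_inter_iff, Set.mem_empty_iff_false, iff_false]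
      rintro ⟨hxK, hxY, ((h1 | h1) | h1)⟩
      · -- x ∈ Y ∩ Klow : f x = t', x ∈ fib(t'), fib(t')∩U = ∅, so x ∈ V; but x ∈ Vᶜ
        have hfx : f x = t' := hlowN x h1 hxY.1
        have hxfib : x ∈ K ∩ f ⁻¹' {t'} := hfib' x hxK hfx
        rcases hNsub x hxY.1 with h2 | h2
        · have : x ∈ (K ∩ f ⁻¹' {t'}) ∩ U := ⟨hxfib, h2⟩
          rw [h'] at this; exact this
        · exact hxY.2 h2
      · have : x ∈ X ∩ Y := ⟨h1, hxY⟩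
        rw [hXY] at this; exact this
      · have hfx : f x = t := hhighN x h1 hxY.1
        have hxfib : x ∈ K ∩ f ⁻¹' {t} := hfibt x hxK hfx
        rcases hNsub x hxY.1 with h2 | h2
        · have : x ∈ (K ∩ f ⁻¹' {t}) ∩ U := ⟨hxfib, h2⟩
          rw [h] at this; exact this
        · exact hxY.2 h2
  · -- fib(t') ∩ U = ∅ (⊆ V), fib(t) ∩ V = ∅ (⊆ U) : split Klow∪X vs Y∪Khigh
    refine split_contra hKconn.isPreconnected (hKlow_closed.union hX_closed)
      (hY_closed.union hKhigh_closed)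
      (hcover _ _ ?_) ?_ ⟨b, hbX.1, Or.inr hbX.2⟩ ⟨a, haY.1, Or.inl haY.2⟩
    · rintro x (((h1 | h1) | h1) | h1)
      · exact Or.inl (Or.inl h1)
      · exact Or.inl (Or.inr h1)
      · exact Or.inr (Or.inl h1)
      · exact Or.inr (Or.inr h1)
    · ext x
      simp only [Set.mem_inter_iff, Set.mem_empty_iff_false, iff_false]
      rintro ⟨hxK, (h1 | h1), (h2 | h2)⟩
      · -- Klow ∩ Y
        have hfx : f x = t' := hlowN x h1 h2.1
        have hxfib : x ∈ K ∩ f ⁻¹' {t'} := hfib' x hxK hfx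
        rcases hNsub x h2.1 with h3 | h3
        · have : x ∈ (K ∩ f ⁻¹' {t'}) ∩ U := ⟨hxfib, h3⟩
          rw [h'] at this; exact this
        · exact h2.2 h3
      · have : x ∈ Klow ∩ Khigh := ⟨h1, h2⟩
        rw [hlowhigh] at this; exact this
      · have : x ∈ X ∩ Y := ⟨h1, h2⟩
        rw [hXY] at this; exact this
      · -- X ∩ Khigh
        have hfx : f x = t := hhighN x h2 h1.1
        have hxfib : x ∈ K ∩ f ⁻¹' {t} := hfibt x hxK hfx
        rcases hNsub x h1.1 with h3 | h3
        · exact h1.2 h3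
        · have : x ∈ (K ∩ f ⁻¹' {t}) ∩ V := ⟨hxfib, h3⟩
          rw [h] at this; exact this
  · -- fib(t') ∩ V = ∅ (⊆ U), fib(t) ∩ U = ∅ (⊆ V) : split Klow∪Y vs X∪Khigh
    refine split_contra hKconn.isPreconnected (hKlow_closed.union hY_closed)
      (hX_closed.union hKhigh_closed)
      (hcover _ _ ?_) ?_ ⟨a, haY.1, Or.inr haY.2⟩ ⟨b, hbX.1, Or.inl hbX.2⟩
    · rintro x (((h1 | h1) | h1) | h1)
      · exact Or.inl (Or.inl h1)
      · exact Or.inr (Or.inl h1)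
      · exact Or.inl (Or.inr h1)
      · exact Or.inr (Or.inr h1)
    · ext x
      simp only [Set.mem_inter_iff, Set.mem_empty_iff_false, iff_false]
      rintro ⟨hxK, (h1 | h1), (h2 | h2)⟩
      · -- Klow ∩ X
        have hfx : f x = t' := hlowN x h1 h2.1
        have hxfib : x ∈ K ∩ f ⁻¹' {t'} := hfib' x hxK hfx
        rcases hNsub x h2.1 with h3 | h3
        · exact h2.2 h3
        · have : x ∈ (K ∩ f ⁻¹' {t'}) ∩ V := ⟨hxfib, h3⟩
          rw [h'] at this; exact this
      · have : x ∈ Klow ∩ Khigh := ⟨h1, h2⟩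
        rw [hlowhigh] at this; exact this
      · have : x ∈ X ∩ Y := ⟨h2, h1⟩
        rw [hXY] at this; exact this
      · -- Y ∩ Khigh
        have hfx : f x = t := hhighN x h2 h1.1
        have hxfib : x ∈ K ∩ f ⁻¹' {t} := hfibt x hxK hfx
        rcases hNsub x h1.1 with h3 | h3
        · have : x ∈ (K ∩ f ⁻¹' {t}) ∩ U := ⟨hxfib, h3⟩
          rw [h] at this; exact this
        · exact h1.2 h3
  · -- fib(t') ∩ V = ∅, fib(t) ∩ V = ∅ : X is the isolated piece
    refine split_contra hKconn.isPreconnected hX_closed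
      ((hKlow_closed.union hY_closed).union hKhigh_closed)
      (hcover _ _ ?_) ?_ ⟨b, hbX⟩ ⟨a, haY.1, Or.inl (Or.inr haY.2)⟩
    · rintro x (((h1 | h1) | h1) | h1)
      · exact Or.inr (Or.inl (Or.inl h1))
      · exact Or.inl h1
      · exact Or.inr (Or.inl (Or.inr h1))
      · exact Or.inr (Or.inr h1)
    · ext x
      simp only [Set.mem_inter_iff, Set.mem_empty_iff_false, iff_false]
      rintro ⟨hxK, hxX, ((h1 | h1) | h1)⟩
      · have hfx : f x = t' := hlowN x h1 hxX.1
        have hxfib : x ∈ K ∩ f ⁻¹' {t'} := hfib' x hxK hfx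
        rcases hNsub x hxX.1 with h2 | h2
        · exact hxX.2 h2
        · have : x ∈ (K ∩ f ⁻¹' {t'}) ∩ V := ⟨hxfib, h2⟩
          rw [h'] at this; exact this
      · have : x ∈ X ∩ Y := ⟨hxX, h1⟩
        rw [hXY] at this; exact this
      · have hfx : f x = t := hhighN x h1 hxX.1
        have hxfib : x ∈ K ∩ f ⁻¹' {t} := hfibt x hxK hfx
        rcases hNsub x hxX.1 with h2 | h2
        · exact hxX.2 h2
        · have : x ∈ (K ∩ f ⁻¹' {t}) ∩ V := ⟨hxfib, h2⟩
          rw [h] at this; exact this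
end

section
/- Let P : ℝⁿ → ℝⁿ be given by the elementary symmetric polynomials, P(x) = (e₁(x), …, eₙ(x)). Then the Jacobian determinant of P equals, up to a nonzero constant, the product ∏_{i<j} (xᵢ − xⱼ). -/
/-!
Differentiating `e_{k+1}` in the variable `x_j` gives `e_k(x̂_j)`, the `k`-th elementary symmetric
function of the coordinates other than `x_j`. Dividing `∏_m (1 + x_m t)` by `1 + x_j t` yields
`e_k(x̂_j) = ∑_{i ≤ k} e_{k-i}(x) (-x_j)^i`, so the Jacobian matrix is a unitriangular matrix times
the transposed Vandermonde matrix of `-x`. Its determinant is therefore exactly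
`∏_{i<j} (x_i - x_j)`, i.e. the constant is `1`.
-/

noncomputable def esymmJacobian (n : ℕ) (x : Fin n → ℝ) : Matrix (Fin n) (Fin n) ℝ :=
  Matrix.of fun i j =>
    fderiv ℝ (fun y : Fin n → ℝ =>
      MvPolynomial.eval y (MvPolynomial.esymm (Fin n) ℝ ((i : ℕ) + 1))) x (Pi.single j 1)

open MvPolynomial Finset Matrix

theorem Finset.univ_val_map_eq_cons_erase {α β : Type*} [Fintype α] [DecidableEq α]
    (f : α → β) (j : α) : univ.val.map f = f j ::ₘ (univ.erase j).val.map f := by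
  rw [← Multiset.map_cons, erase_val, Multiset.cons_erase (mem_univ_val j)]

namespace Multiset

theorem esymm_cons_succ {R : Type*} [CommSemiring R] (a : R) (s : Multiset R) (k : ℕ) :
    (a ::ₘ s).esymm (k + 1) = s.esymm (k + 1) + a * s.esymm k := by
  simp [esymm, powersetCard_cons, map_map, sum_map_mul_left]

theorem esymm_eq_sum_esymm_cons_mul_pow {R : Type*} [CommRing R] (a : R) (s : Multiset R)
    (k : ℕ) : s.esymm k = ∑ i ∈ Finset.range (k + 1), (a ::ₘ s).esymm (k - i) * (-a) ^ i := by
  induction k with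
  | zero => simp [esymm]
  | succ k ih =>
    rw [sum_range_succ', Nat.sub_zero, pow_zero, mul_one, esymm_cons_succ]
    simp only [Nat.add_sub_add_right, pow_succ, ← mul_assoc, ← sum_mul, ← ih]
    ring

end Multiset

namespace MvPolynomial

theorem eval_esymm_succ_eq_erase {σ R : Type*} [CommSemiring R] [Fintype σ] [DecidableEq σ]
    (y : σ → R) (j : σ) (k : ℕ) :
    eval y (esymm σ R (k + 1)) =
      ((univ.erase j).val.map y).esymm (k + 1) + y j * ((univ.erase j).val.map y).esymm k := by
  change aeval y _ = _
  rw [aeval_esymm_eq_multiset_esymm, univ_val_map_eq_cons_erase y j, Multiset.esymm_cons_succ]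

theorem fderiv_eval_esymm_succ_apply_single {𝕜 σ : Type*} [NontriviallyNormedField 𝕜]
    [CompleteSpace 𝕜] [Fintype σ] [DecidableEq σ] (x : σ → 𝕜) (j : σ) (k : ℕ) :
    fderiv 𝕜 (fun y => eval y (esymm σ 𝕜 (k + 1))) x (Pi.single j 1) =
      ((univ.erase j).val.map x).esymm k := by
  have hline : ∀ t : 𝕜, eval (x + t • Pi.single j 1) (esymm σ 𝕜 (k + 1)) =
      ((univ.erase j).val.map x).esymm (k + 1) +
        (x j + t) * ((univ.erase j).val.map x).esymm k := by
    intro t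
    have hoff : ∀ i ∈ (univ.erase j).val, (x + t • Pi.single j 1 : σ → 𝕜) i = x i := by
      intro i hi
      simp [ne_of_mem_erase hi]
    rw [eval_esymm_succ_eq_erase _ j, Multiset.map_congr rfl hoff]
    simp
  have hdiff : DifferentiableAt 𝕜 (fun y => eval y (esymm σ 𝕜 (k + 1))) x :=
    (AnalyticOnNhd.eval_mvPolynomial _ x (Set.mem_univ x)).differentiableAt
  rw [← hdiff.lineDeriv_eq_fderiv, lineDeriv, _root_.funext hline]
  simp

end MvPolynomial

section

variable {R : Type*} [CommRing R] {n : ℕ}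

def esymmEraseMatrix (x : Fin n → R) : Matrix (Fin n) (Fin n) R :=
  of fun i j => ((univ.erase j).val.map x).esymm i

def esymmLowerMatrix (x : Fin n → R) : Matrix (Fin n) (Fin n) R :=
  of fun i m => if m ≤ i then (univ.val.map x).esymm (i - m) else 0

theorem esymmEraseMatrix_eq_mul (x : Fin n → R) :
    esymmEraseMatrix x = esymmLowerMatrix x * (vandermonde (-x))ᵀ := by
  ext i j
  rw [esymmEraseMatrix, of_apply, Multiset.esymm_eq_sum_esymm_cons_mul_pow (x j),
    ← univ_val_map_eq_cons_erase, mul_apply]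
  simp only [esymmLowerMatrix, of_apply, transpose_apply, vandermonde_apply, Pi.neg_apply,
    ite_mul, zero_mul, Fin.le_def]
  rw [Fin.sum_univ_eq_sum_range (fun m => if m ≤ (i : ℕ) then
    (univ.val.map x).esymm (i - m) * (-x j) ^ m else 0), ← sum_filter]
  congr 1
  ext m
  simp only [mem_filter, mem_range]
  omega

theorem det_esymmLowerMatrix (x : Fin n → R) : (esymmLowerMatrix x).det = 1 := by
  rw [det_of_isLowerTriangular (esymmLowerMatrix x) fun i m him => if_neg (not_le.2 him)]
  simp [esymmLowerMatrix, Multiset.esymm]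

theorem det_esymmEraseMatrix (x : Fin n → R) :
    (esymmEraseMatrix x).det = ∏ i : Fin n, ∏ j ∈ Ioi i, (x i - x j) := by
  rw [esymmEraseMatrix_eq_mul, det_mul, det_esymmLowerMatrix, det_transpose, det_vandermonde,
    one_mul]
  simp only [Pi.neg_apply, neg_sub_neg]

end

/-- The Jacobian determinant of the elementary symmetric polynomial map equals,
up to a nonzero constant, `∏_{i<j} (xᵢ - xⱼ)`. -/
theorem stmt_7 (n : ℕ) :
    ∃ c : ℝ, c ≠ 0 ∧ ∀ x : Fin n → ℝ,
      (esymmJacobian n x).det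
        = c * ∏ i : Fin n, ∏ j ∈ Finset.Ioi i, (x i - x j) := by
  refine ⟨1, one_ne_zero, fun x => ?_⟩
  have hJ : esymmJacobian n x = esymmEraseMatrix x := by
    ext i j
    exact fderiv_eval_esymm_succ_apply_single x j i
  rw [hJ, det_esymmEraseMatrix, one_mul]
end

section
/- For n = 2 and the dihedral group I₂(m) acting on ℝ² with basic invariants of degrees 2 and m, the image of the Chevalley map P : ℝ² → ℝ² intersected with {p : p₁ ≤ a²} is Whitney 1-regular for every a > 0. Concretely, for the group I₂(2) = ℤ/2 × ℤ/2 with P(x, y) = (x² + y², x²y²) (adjusted basic invariants), the image set {(u, v) : u ≥ 0, 0 ≤ v ≤ u²/4, u ≤ a²} is Whitney 1-regular. -/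
open Set
open scoped NNReal ENNReal

theorem LipschitzWith.finset_sum {α ι E : Type*} [PseudoEMetricSpace α] [SeminormedAddCommGroup E]
    (s : Finset ι) {f : ι → α → E} {K : ι → ℝ≥0} (hf : ∀ i ∈ s, LipschitzWith (K i) (f i)) :
    LipschitzWith (∑ i ∈ s, K i) fun a ↦ ∑ i ∈ s, f i a := by
  induction s using Finset.cons_induction with
  | empty => simpa using LipschitzWith.const (0 : E)
  | cons i s hi ih =>
    simp only [Finset.sum_cons]
    exact (hf i (s.mem_cons_self i)).add (ih fun j hj ↦ hf j (Finset.mem_cons_of_mem hj))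

theorem LipschitzWith.smul_const {α E : Type*} [PseudoEMetricSpace α] [SeminormedAddCommGroup E]
    [NormedSpace ℝ E] {g : α → ℝ} {K : ℝ≥0} (hg : LipschitzWith K g) (w : E) :
    LipschitzWith (K * ‖w‖₊) fun a ↦ g a • w := by
  simpa [Function.comp_def, mul_comm] using
    (ContinuousLinearMap.toSpanSingleton ℝ w).lipschitz.comp hg

theorem eVariationOn_Icc_le_of_lipschitzOnWith {E : Type*} [PseudoEMetricSpace E] {γ : ℝ → E}
    {K : ℝ≥0} {a b : ℝ} (hγ : LipschitzOnWith K γ (Icc a b)) :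
    eVariationOn γ (Icc a b) ≤ K * ENNReal.ofReal (b - a) := by
  rcases le_or_gt a b with hab | hab
  · have hid := (monotoneOn_id (s := Icc a b)).eVariationOn_eq
      (left_mem_Icc.2 hab) (right_mem_Icc.2 hab)
    rw [inter_self] at hid
    simpa [hid] using hγ.comp_eVariationOn_le (mapsTo_id _)
  · simp [Icc_eq_empty_of_lt hab]

theorem whitneyOneRegular_of_lipschitzWith {E : Type*} [PseudoMetricSpace E] {K : Set E}
    (C : ℝ≥0) (hC : 0 < C) (hpath : ∀ x ∈ K, ∀ y ∈ K, ∃ γ : ℝ → E, γ 0 = x ∧ γ 1 = y ∧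
      MapsTo γ (Icc 0 1) K ∧ LipschitzWith (C * nndist x y) γ) :
    WhitneyOneRegular K := by
  refine ⟨C, hC, fun x hx y hy ↦ ?_⟩
  obtain ⟨γ, hγ₀, hγ₁, hγK, hγ⟩ := hpath x hx y hy
  refine ⟨γ, hγ.continuous.continuousOn, hγ₀, hγ₁, hγK, ?_⟩
  calc eVariationOn γ (Icc 0 1) ≤ ↑(C * nndist x y) * ENNReal.ofReal (1 - 0) :=
        eVariationOn_Icc_le_of_lipschitzOnWith hγ.lipschitzOnWith
    _ = ENNReal.ofReal C * edist x y := by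
        rw [sub_zero, ENNReal.ofReal_one, mul_one, ENNReal.coe_mul, ENNReal.ofReal_coe_nnreal,
          edist_nndist]

section PolygonalPath

variable {E : Type*} [SeminormedAddCommGroup E] [NormedSpace ℝ E] {n : ℕ}

-- The leg `w i` is traversed while `t` runs through `[i / n, (i + 1) / n]`.
noncomputable def polygonalPath (x : E) (w : Fin n → E) (t : ℝ) : E :=
  x + ∑ i : Fin n, (projIcc (0 : ℝ) 1 zero_le_one (n * t - (i : ℕ)) : ℝ) • w i

theorem polygonalPath_zero (x : E) (w : Fin n → E) : polygonalPath x w 0 = x := by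
  simp [polygonalPath, projIcc_of_le_left]

theorem polygonalPath_one (x : E) (w : Fin n → E) : polygonalPath x w 1 = x + ∑ i, w i := by
  have hleg (i : Fin n) : (1 : ℝ) ≤ n * 1 - (i : ℕ) := by
    have : ((i : ℕ) : ℝ) + 1 ≤ n := by exact_mod_cast i.isLt
    linarith
  simp only [polygonalPath, projIcc_of_right_le _ (hleg _), one_smul]

theorem lipschitzWith_polygonalPath (x : E) (w : Fin n → E) :
    LipschitzWith (n * ∑ i, ‖w i‖₊) (polygonalPath x w) := by
  have hleg (i : Fin n) : LipschitzWith (n * ‖w i‖₊)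
      fun t : ℝ ↦ (projIcc (0 : ℝ) 1 zero_le_one (n * t - (i : ℕ)) : ℝ) • w i := by
    refine LipschitzWith.smul_const ?_ (w i)
    have := (LipschitzWith.subtype_val _).comp ((LipschitzWith.projIcc zero_le_one).comp
      ((lipschitzWith_smul (n : ℝ)).sub (LipschitzWith.const ((i : ℕ) : ℝ))))
    simpa [Function.comp_def] using this
  rw [Finset.mul_sum, ← zero_add (∑ i, _)]
  exact (LipschitzWith.const x).add (LipschitzWith.finset_sum Finset.univ fun i _ ↦ hleg i)

end PolygonalPath

section Plane

local notation "ℝ²" => EuclideanSpace ℝ (Fin 2)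

noncomputable def manhattanPath (x y : ℝ²) : ℝ → ℝ² :=
  polygonalPath x ![EuclideanSpace.single 1 (min (x 1) (y 1) - x 1),
    EuclideanSpace.single 0 (y 0 - x 0), EuclideanSpace.single 1 (y 1 - min (x 1) (y 1))]

variable (x y : ℝ²)

theorem manhattanPath_zero : manhattanPath x y 0 = x := polygonalPath_zero _ _

theorem manhattanPath_one : manhattanPath x y 1 = y := by
  rw [manhattanPath, polygonalPath_one]
  ext i
  fin_cases i <;> simp [Fin.sum_univ_three]

theorem manhattanPath_apply_zero (t : ℝ) :
    manhattanPath x y t 0 =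
      AffineMap.lineMap (x 0) (y 0) (projIcc (0 : ℝ) 1 zero_le_one (3 * t - 1) : ℝ) := by
  simp [manhattanPath, polygonalPath, Fin.sum_univ_three, AffineMap.lineMap_apply_ring', add_comm]

theorem manhattanPath_apply_one (t : ℝ) :
    manhattanPath x y t 1 =
      x 1 + (projIcc (0 : ℝ) 1 zero_le_one (3 * t) : ℝ) * (min (x 1) (y 1) - x 1)
        + (projIcc (0 : ℝ) 1 zero_le_one (3 * t - 2) : ℝ) * (y 1 - min (x 1) (y 1)) := by
  simp [manhattanPath, polygonalPath, Fin.sum_univ_three, add_assoc]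

theorem lipschitzWith_manhattanPath : LipschitzWith (6 * nndist x y) (manhattanPath x y) := by
  refine (lipschitzWith_polygonalPath _ _).weaken ?_
  rw [← NNReal.coe_le_coe]
  have h0 := PiLp.dist_apply_le y x 0
  have h1 := PiLp.dist_apply_le y x 1
  have hdetour : |min (x 1) (y 1) - x 1| + |y 1 - min (x 1) (y 1)| = |y 1 - x 1| := by
    rcases le_total (x 1) (y 1) with h | h
    · simp [min_eq_left h]
    · simp [min_eq_right h, abs_sub_comm]
  rw [Real.dist_eq, dist_comm] at h0 h1
  push_cast
  simp only [Fin.sum_univ_three, Matrix.cons_val, PiLp.norm_single, Real.norm_eq_abs]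
  linarith

def regionUnder (I : Set ℝ) (f : ℝ → ℝ) : Set ℝ² := {z | z 0 ∈ I ∧ 0 ≤ z 1 ∧ z 1 ≤ f (z 0)}

variable {I : Set ℝ} [I.OrdConnected] {f : ℝ → ℝ}

theorem mem_regionUnder_of_mem_uIcc (hf : MonotoneOn f I) {x y z : ℝ²}
    (hx : x ∈ regionUnder I f) (hy : y ∈ regionUnder I f) (hz₀ : z 0 ∈ uIcc (x 0) (y 0))
    (hz₁ : 0 ≤ z 1) (hz₁' : z 1 ≤ min (x 1) (y 1)) : z ∈ regionUnder I f := by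
  obtain ⟨hxI, -, hxf⟩ := hx
  obtain ⟨hyI, -, hyf⟩ := hy
  have hzI : z 0 ∈ I := Set.OrdConnected.uIcc_subset ‹_› hxI hyI hz₀
  refine ⟨hzI, hz₁, ?_⟩
  rcases le_total (x 0) (y 0) with h | h
  · rw [uIcc_of_le h] at hz₀
    calc z 1 ≤ x 1 := hz₁'.trans (min_le_left _ _)
      _ ≤ f (x 0) := hxf
      _ ≤ f (z 0) := hf hxI hzI hz₀.1
  · rw [uIcc_of_ge h] at hz₀
    calc z 1 ≤ y 1 := hz₁'.trans (min_le_right _ _)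
      _ ≤ f (y 0) := hyf
      _ ≤ f (z 0) := hf hyI hzI hz₀.1

theorem mapsTo_manhattanPath_regionUnder (hf : MonotoneOn f I) {x y : ℝ²}
    (hx : x ∈ regionUnder I f) (hy : y ∈ regionUnder I f) :
    MapsTo (manhattanPath x y) (Icc 0 1) (regionUnder I f) := by
  intro t _
  have hz₀ := manhattanPath_apply_zero x y t
  have hz₁ := manhattanPath_apply_one x y t
  have hc (s : ℝ) := (projIcc (0 : ℝ) 1 zero_le_one s).2
  have hm : 0 ≤ min (x 1) (y 1) := le_min hx.2.1 hy.2.1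
  rcases le_total t (1 / 3) with h₁ | h₁
  · rw [projIcc_of_le_left _ (by linarith : 3 * t - 1 ≤ 0)] at hz₀
    rw [projIcc_of_le_left _ (by linarith : 3 * t - 2 ≤ 0)] at hz₁
    have hmx := sub_nonneg.2 (min_le_left (x 1) (y 1))
    have hd := mul_nonneg (hc (3 * t)).1 hmx
    have hd' := mul_nonneg (sub_nonneg.2 (hc (3 * t)).2) hmx
    simp only [zero_mul, add_zero] at hz₁
    exact mem_regionUnder_of_mem_uIcc hf hx hx (by simp [hz₀]) (by linarith)
      (by rw [min_self]; linarith)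
  rcases le_total t (2 / 3) with h₂ | h₂
  · rw [projIcc_of_right_le _ (by linarith : 1 ≤ 3 * t),
      projIcc_of_le_left _ (by linarith : 3 * t - 2 ≤ 0)] at hz₁
    refine mem_regionUnder_of_mem_uIcc hf hx hy ?_ (by simp [hz₁, hm]) (by simp [hz₁])
    rw [hz₀, ← segment_eq_uIcc]
    exact lineMap_mem_segment ℝ _ _ (hc _)
  · rw [projIcc_of_right_le _ (by linarith : 1 ≤ 3 * t - 1)] at hz₀
    rw [projIcc_of_right_le _ (by linarith : 1 ≤ 3 * t)] at hz₁
    have hmy := sub_nonneg.2 (min_le_right (x 1) (y 1))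
    have hd := mul_nonneg (hc (3 * t - 2)).1 hmy
    have hd' := mul_nonneg (sub_nonneg.2 (hc (3 * t - 2)).2) hmy
    simp only [one_mul] at hz₁
    exact mem_regionUnder_of_mem_uIcc hf hy hy (by simp [hz₀]) (by linarith)
      (by rw [min_self]; linarith)

theorem whitneyOneRegular_regionUnder (hf : MonotoneOn f I) :
    WhitneyOneRegular (regionUnder I f) :=
  whitneyOneRegular_of_lipschitzWith 6 (by norm_num) fun x hx y hy ↦
    ⟨manhattanPath x y, manhattanPath_zero x y, manhattanPath_one x y,
      mapsTo_manhattanPath_regionUnder hf hx hy, lipschitzWith_manhattanPath x y⟩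

end Plane

theorem stmt_13_general (a : ℝ) :
    WhitneyOneRegular {z : EuclideanSpace ℝ (Fin 2) |
      0 ≤ z 0 ∧ 0 ≤ z 1 ∧ z 1 ≤ (z 0) ^ 2 / 4 ∧ z 0 ≤ a ^ 2} := by
  have hf : MonotoneOn (fun u : ℝ ↦ u ^ 2 / 4) (Icc 0 (a ^ 2)) := fun u hu v _ huv ↦ by
    dsimp only
    gcongr
    exact hu.1
  convert whitneyOneRegular_regionUnder hf using 1
  ext z
  simp only [regionUnder, mem_Icc, mem_ofPred_eq]
  tauto

/-- For the dihedral group `I₂(2)` with (adjusted) basic invariants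
`(x² + y², x²y²)`, the image region `{(u,v) : 0 ≤ v ≤ u²/4, 0 ≤ u ≤ a²}`
under the parabola is Whitney 1-regular. -/
theorem stmt_13 (a : ℝ) (ha : 0 < a) :
    WhitneyOneRegular {z : EuclideanSpace ℝ (Fin 2) |
      0 ≤ z 0 ∧ 0 ≤ z 1 ∧ z 1 ≤ (z 0) ^ 2 / 4 ∧ z 0 ≤ a ^ 2} :=
  stmt_13_general a
end
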